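/- arXiv:1603.08281 — 4 statements merged into one kernel-verified Lean document; each statement's English description precedes it below -/
import Mathlib

section
/- If z, w ∈ (ℂ*)^m lie on the same ℝ₊^m-orbit, z_j = exp(ρ₁ⱼ/2 + i·θⱼ), w_j = exp(ρ₂ⱼ/2 + i·θⱼ), then the Berezin kernel is given exactly by P(z,w) = B(ζ,ζ) / (B(z*,z*)·B(w*,w*))^{1/2}, where ζ_j = exp((ρ₁ⱼ+ρ₂ⱼ)/4), z*_j = exp(ρ₁ⱼ/2) and w*_j = exp(ρ₂ⱼ/2). In particular the Berezin kernel between same-orbit points is expressed entirely through diagonal values of the Bergman kernel. -/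
open Complex Finset ComplexConjugate

/-- The monomial `z^α = ∏ j, z_j^{α_j}` with integer exponents. -/
noncomputable def mpow {m : ℕ} (z : Fin m → ℂ) (α : Fin m → ℤ) : ℂ :=
  ∏ j, (z j) ^ (α j)

/-- The toric Bergman kernel in the toric frame:
`B(z,w) = Σ_{α ∈ S} z^α ⬝ conj(w)^α / Q(α)`. -/
noncomputable def Bker {m : ℕ} (S : Finset (Fin m → ℤ)) (Q : (Fin m → ℤ) → ℝ)
    (z w : Fin m → ℂ) : ℂ :=
  ∑ α ∈ S, mpow z α * conj (mpow w α) / (Q α : ℂ)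

/-- The Berezin (normalized Szegő) kernel `P(z,w) = |B(z,w)|/(B(z,z)B(w,w))^{1/2}`;
the diagonal values of `B` are positive reals, so `P` is well defined. -/
noncomputable def Pker {m : ℕ} (S : Finset (Fin m → ℤ)) (Q : (Fin m → ℤ) → ℝ)
    (z w : Fin m → ℂ) : ℝ :=
  ‖Bker S Q z w‖ / Real.sqrt ((Bker S Q z z).re * (Bker S Q w w).re)

/-!
Because `z` and `w` have the same angles `θ`, the phases `e^{i⟨α,θ⟩}` of `z^α` and `conj(w)^α`
cancel, so `B(z,w)` is the real exponential sum `F(x) = expSum S Q x = Σ_{α ∈ S} e^{⟨α,x⟩} / Q(α)` evaluated at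
`x = ρ₁/2 + ρ₂/2`, the sum of the log-moduli of `z` and `w`. Since `ζ` has log-moduli
`(ρ₁+ρ₂)/4` on both sides, `B(ζ,ζ)` is the same value `F(ρ₁/2 + ρ₂/2)`, while
`B(z,z) = F(ρ₁) = B(z*,z*)` and `B(w,w) = F(ρ₂) = B(w*,w*)`. Positivity of `Q` makes `F ≥ 0`,
so the absolute value in `P` can be dropped.
-/

lemma Complex.exp_zpow_mul_conj_exp_zpow (u v : ℂ) (n : ℤ) :
    exp u ^ n * conj (exp v ^ n) = exp (n * (u + conj v)) := by
  rw [map_zpow₀, ← exp_conj, ← exp_int_mul, ← exp_int_mul, ← exp_add, mul_add]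

section ExpSum

variable {m : ℕ} (S : Finset (Fin m → ℤ)) (Q : (Fin m → ℤ) → ℝ)

/-- `expSum S Q ρ = B(z,z)` for `z_j = exp(ρ_j/2 + iθ_j)`. -/
noncomputable def expSum (x : Fin m → ℝ) : ℝ :=
  ∑ α ∈ S, Real.exp (∑ j, α j * x j) / Q α

lemma expSum_nonneg (hQ : ∀ α ∈ S, 0 < Q α) (x : Fin m → ℝ) : 0 ≤ expSum S Q x :=
  sum_nonneg fun α hα => div_nonneg (Real.exp_nonneg _) (hQ α hα).le

lemma mpow_mul_conj_mpow_of_same_arg (a b t : Fin m → ℝ) (α : Fin m → ℤ) :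
    mpow (fun j => exp (a j + t j * I)) α * conj (mpow (fun j => exp (b j + t j * I)) α)
      = Real.exp (∑ j, α j * (a j + b j)) := by
  have hphase (j : Fin m) : (a j + t j * I : ℂ) + conj (b j + t j * I) = a j + b j := by
    simp only [map_add, map_mul, conj_ofReal, conj_I]
    ring
  simp only [mpow, map_prod, ← prod_mul_distrib, exp_zpow_mul_conj_exp_zpow, hphase,
    ← exp_sum]
  push_cast
  rfl

lemma Bker_of_same_arg (a b t : Fin m → ℝ) :
    Bker S Q (fun j => exp (a j + t j * I)) (fun j => exp (b j + t j * I))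
      = expSum S Q (a + b) := by
  simp only [Bker, expSum, mpow_mul_conj_mpow_of_same_arg, Pi.add_apply]
  push_cast
  rfl

end ExpSum

theorem berezin_same_orbit_formula_through_diagonal_general
    (m : ℕ)
    (S : Finset (Fin m → ℤ))
    (Q : (Fin m → ℤ) → ℝ) (hQ : ∀ α ∈ S, 0 < Q α)
    (ρ₁ ρ₂ θ : Fin m → ℝ) (z w ζ zstar wstar : Fin m → ℂ)
    (hz : ∀ j, z j = Complex.exp ((ρ₁ j / 2 : ℝ) + (θ j : ℝ) * Complex.I))
    (hw : ∀ j, w j = Complex.exp ((ρ₂ j / 2 : ℝ) + (θ j : ℝ) * Complex.I))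
    (hζ : ∀ j, ζ j = Complex.exp (((ρ₁ j + ρ₂ j) / 4 : ℝ)))
    (hzstar : ∀ j, zstar j = Complex.exp ((ρ₁ j / 2 : ℝ)))
    (hwstar : ∀ j, wstar j = Complex.exp ((ρ₂ j / 2 : ℝ))) :
    Pker S Q z w
      = (Bker S Q ζ ζ).re
        / Real.sqrt ((Bker S Q zstar zstar).re * (Bker S Q wstar wstar).re) := by
  have real_pt {v : Fin m → ℂ} {x : Fin m → ℝ} (hv : ∀ j, v j = exp (x j : ℝ)) :
      v = fun j => exp (x j + ((0 : Fin m → ℝ) j : ℝ) * I) := by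
    ext j; simp [hv]
  rw [funext hz, funext hw, real_pt hζ, real_pt hzstar, real_pt hwstar]
  simp only [Pker, Bker_of_same_arg, norm_real, Real.norm_eq_abs, ofReal_re,
    abs_of_nonneg (expSum_nonneg S Q hQ _)]
  congr 2
  ext j
  simp only [Pi.add_apply]
  ring

/-- if `z, w` lie on the same `ℝ₊^m`-orbit, then
`P(z,w) = B(ζ,ζ)/(B(z*,z*)·B(w*,w*))^{1/2}` where `ζ` is the `ℝ₊^m`-midpoint
`ζ_j = exp((ρ₁ⱼ+ρ₂ⱼ)/4)` and `z*, w*` are the `ℝ₊^m`-orbit representatives; so the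
Berezin kernel between same-orbit points is expressed through diagonal values of `B`. -/
theorem berezin_same_orbit_formula_through_diagonal
    (m : ℕ) (hm : 1 ≤ m)
    (S : Finset (Fin m → ℤ)) (hS : S.Nonempty)
    (Q : (Fin m → ℤ) → ℝ) (hQ : ∀ α ∈ S, 0 < Q α)
    (ρ₁ ρ₂ θ : Fin m → ℝ) (z w ζ zstar wstar : Fin m → ℂ)
    (hz : ∀ j, z j = Complex.exp ((ρ₁ j / 2 : ℝ) + (θ j : ℝ) * Complex.I))
    (hw : ∀ j, w j = Complex.exp ((ρ₂ j / 2 : ℝ) + (θ j : ℝ) * Complex.I))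
    (hζ : ∀ j, ζ j = Complex.exp (((ρ₁ j + ρ₂ j) / 4 : ℝ)))
    (hzstar : ∀ j, zstar j = Complex.exp ((ρ₁ j / 2 : ℝ)))
    (hwstar : ∀ j, wstar j = Complex.exp ((ρ₂ j / 2 : ℝ))) :
    Pker S Q z w
      = (Bker S Q ζ ζ).re
        / Real.sqrt ((Bker S Q zstar zstar).re * (Bker S Q wstar wstar).re) :=
  berezin_same_orbit_formula_through_diagonal_general m S Q hQ ρ₁ ρ₂ θ z w ζ zstar wstar hz hw hζ
    hzstar hwstar
end

section
/- Fix ρ₁, ρ₂, θ ∈ ℝ^m and let z_k = z and w_k = w be the fixed points with coordinates z_j = exp(ρ₁ⱼ/2 + i·θⱼ), w_j = exp(ρ₂ⱼ/2 + i·θⱼ) (the same ℝ₊^m-orbit). Assume the diagonal asymptotics hypothesis holds for each of the three vectors ρ ∈ {ρ₁, ρ₂, (ρ₁+ρ₂)/2}, i.e. (1/k)·log B_k(e^{ρ/2}, e^{ρ/2}) → φ̃(ρ) as k → ∞. Then the pointwise limit exists: (1/k)·log P_k(z,w) → φ̃((ρ₁+ρ₂)/2) − (φ̃(ρ₁) +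 φ̃(ρ₂))/2 as k → ∞. (This limit equals minus one half of the Calabi diastasis D(z,w) between the same-orbit points z and w.) -/
/-!
For `z = e^{ρ₁/2 + iθ}` and `w = e^{ρ₂/2 + iθ}` the phases of `z^α` and `conj(w)^α` cancel, so
`B_k(z,w) = Σ_α e^{⟨α,(ρ₁+ρ₂)/2⟩} / Q_k(α)`, a positive real number equal to the diagonal value
`B_k(e^{ρ/2}, e^{ρ/2})` at the midpoint `ρ = (ρ₁+ρ₂)/2`. Hence `log P_k(z,w)` is exactly
`log B_k` at the midpoint minus the mean of `log B_k` at `ρ₁` and `ρ₂`, and the limit follows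
from the three diagonal asymptotics.
-/

open Complex Finset ComplexConjugate Filter

noncomputable def orbitSum {m : ℕ} (S : Finset (Fin m → ℤ)) (Q : (Fin m → ℤ) → ℝ)
    (ρ : Fin m → ℝ) : ℝ :=
  ∑ α ∈ S, Real.exp (∑ j, α j * ρ j) / Q α

lemma orbitSum_pos {m : ℕ} {S : Finset (Fin m → ℤ)} {Q : (Fin m → ℤ) → ℝ}
    (hS : S.Nonempty) (hQ : ∀ α ∈ S, 0 < Q α) (ρ : Fin m → ℝ) : 0 < orbitSum S Q ρ :=
  Finset.sum_pos (fun α hα => div_pos (Real.exp_pos _) (hQ α hα)) hS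

lemma mpow_exp {m : ℕ} (u : Fin m → ℂ) (α : Fin m → ℤ) :
    mpow (fun j => Complex.exp (u j)) α = Complex.exp (∑ j, α j * u j) := by
  rw [Complex.exp_sum]
  exact Finset.prod_congr rfl fun j _ => (Complex.exp_int_mul (u j) (α j)).symm

lemma Bker_exp_half_of_same_orbit {m : ℕ} (S : Finset (Fin m → ℤ)) (Q : (Fin m → ℤ) → ℝ)
    (ρ ρ' θ : Fin m → ℝ) :
    Bker S Q (fun j => Complex.exp ((ρ j / 2 : ℝ) + (θ j : ℝ) * I))
        (fun j => Complex.exp ((ρ' j / 2 : ℝ) + (θ j : ℝ) * I))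
      = orbitSum S Q (fun j => (ρ j + ρ' j) / 2) := by
  simp only [Bker, orbitSum, mpow_exp, ← Complex.exp_conj, ← Complex.exp_add, map_sum,
    ← Finset.sum_add_distrib]
  push_cast
  refine Finset.sum_congr rfl fun α _ => ?_
  congr 2
  refine Finset.sum_congr rfl fun j _ => ?_
  simp only [map_mul, map_add, map_div₀, Complex.conj_ofReal, map_intCast, Complex.conj_I,
    map_ofNat]
  ring

lemma Bker_exp_half_diag {m : ℕ} (S : Finset (Fin m → ℤ)) (Q : (Fin m → ℤ) → ℝ)
    (ρ : Fin m → ℝ) :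
    Bker S Q (fun j => (Real.exp (ρ j / 2) : ℂ)) (fun j => (Real.exp (ρ j / 2) : ℂ))
      = orbitSum S Q ρ := by
  have h := Bker_exp_half_of_same_orbit S Q ρ ρ 0
  simpa only [Pi.zero_apply, Complex.ofReal_zero, zero_mul, add_zero, add_self_div_two,
    ← Complex.ofReal_exp] using h

lemma log_Pker_of_same_orbit {m : ℕ} {S : Finset (Fin m → ℤ)} {Q : (Fin m → ℤ) → ℝ}
    (hS : S.Nonempty) (hQ : ∀ α ∈ S, 0 < Q α) (ρ₁ ρ₂ θ : Fin m → ℝ) :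
    Real.log (Pker S Q (fun j => Complex.exp ((ρ₁ j / 2 : ℝ) + (θ j : ℝ) * I))
        (fun j => Complex.exp ((ρ₂ j / 2 : ℝ) + (θ j : ℝ) * I)))
      = Real.log (orbitSum S Q (fun j => (ρ₁ j + ρ₂ j) / 2))
        - (Real.log (orbitSum S Q ρ₁) + Real.log (orbitSum S Q ρ₂)) / 2 := by
  have hpos := orbitSum_pos hS hQ
  simp only [Pker, Bker_exp_half_of_same_orbit, add_self_div_two, Complex.ofReal_re,
    Complex.norm_real, Real.norm_of_nonneg (hpos _).le]
  rw [Real.log_div (hpos _).ne' (Real.sqrt_ne_zero'.2 (mul_pos (hpos _) (hpos _))),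
    Real.log_sqrt (mul_pos (hpos _) (hpos _)).le, Real.log_mul (hpos _).ne' (hpos _).ne']

theorem berezin_same_orbit_pointwise_limit_general
    (m : ℕ)
    (S : ℕ → Finset (Fin m → ℤ)) (hS : ∀ k, (S k).Nonempty)
    (Q : ℕ → (Fin m → ℤ) → ℝ) (hQ : ∀ k, ∀ α ∈ S k, 0 < Q k α)
    (φ : (Fin m → ℝ) → ℝ)
    (ρ₁ ρ₂ θ : Fin m → ℝ) (z w : Fin m → ℂ)
    (hz : ∀ j, z j = Complex.exp ((ρ₁ j / 2 : ℝ) + (θ j : ℝ) * Complex.I))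
    (hw : ∀ j, w j = Complex.exp ((ρ₂ j / 2 : ℝ) + (θ j : ℝ) * Complex.I))
    (hdiag : ∀ ρ ∈ ({ρ₁, ρ₂, fun j => (ρ₁ j + ρ₂ j) / 2} : Set (Fin m → ℝ)),
      Tendsto (fun k : ℕ => (1 / (k : ℝ)) * Real.log
          ((Bker (S k) (Q k) (fun j => (Real.exp (ρ j / 2) : ℂ))
            (fun j => (Real.exp (ρ j / 2) : ℂ))).re))
        atTop (nhds (φ ρ))) :
    Tendsto (fun k : ℕ => (1 / (k : ℝ)) * Real.log (Pker (S k) (Q k) z w))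
      atTop (nhds (φ (fun j => (ρ₁ j + ρ₂ j) / 2) - (φ ρ₁ + φ ρ₂) / 2)) := by
  obtain rfl : z = _ := funext hz
  obtain rfl : w = _ := funext hw
  have hlim : ∀ ρ ∈ ({ρ₁, ρ₂, fun j => (ρ₁ j + ρ₂ j) / 2} : Set (Fin m → ℝ)),
      Tendsto (fun k : ℕ => (1 / (k : ℝ)) * Real.log (orbitSum (S k) (Q k) ρ))
        atTop (nhds (φ ρ)) := fun ρ hρ => by
    simpa only [Bker_exp_half_diag, Complex.ofReal_re] using hdiag ρ hρ
  have h₁ := hlim ρ₁ (by simp)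
  have h₂ := hlim ρ₂ (by simp)
  have hmid := hlim (fun j => (ρ₁ j + ρ₂ j) / 2) (by simp)
  refine (hmid.sub ((h₁.add h₂).div_const 2)).congr fun k => ?_
  rw [log_Pker_of_same_orbit (hS k) (hQ k)]
  ring

/-- if `z, w` lie on the same `ℝ₊^m`-orbit and the Tian–Zelditch diagonal
asymptotics `(1/k)·log B_k(e^{ρ/2},e^{ρ/2}) → φ̃(ρ)` hold for `ρ ∈ {ρ₁, ρ₂, (ρ₁+ρ₂)/2}`,
then the pointwise limit exists:
`(1/k)·log P_k(z,w) → φ̃((ρ₁+ρ₂)/2) − (φ̃(ρ₁)+φ̃(ρ₂))/2`,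
i.e. minus one half of the Calabi diastasis between `z` and `w`. -/
theorem berezin_same_orbit_pointwise_limit
    (m : ℕ) (hm : 1 ≤ m)
    (S : ℕ → Finset (Fin m → ℤ)) (hS : ∀ k, (S k).Nonempty)
    (Q : ℕ → (Fin m → ℤ) → ℝ) (hQ : ∀ k, ∀ α ∈ S k, 0 < Q k α)
    (φ : (Fin m → ℝ) → ℝ)
    (ρ₁ ρ₂ θ : Fin m → ℝ) (z w : Fin m → ℂ)
    (hz : ∀ j, z j = Complex.exp ((ρ₁ j / 2 : ℝ) + (θ j : ℝ) * Complex.I))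
    (hw : ∀ j, w j = Complex.exp ((ρ₂ j / 2 : ℝ) + (θ j : ℝ) * Complex.I))
    (hdiag : ∀ ρ ∈ ({ρ₁, ρ₂, fun j => (ρ₁ j + ρ₂ j) / 2} : Set (Fin m → ℝ)),
      Tendsto (fun k : ℕ => (1 / (k : ℝ)) * Real.log
          ((Bker (S k) (Q k) (fun j => (Real.exp (ρ j / 2) : ℂ))
            (fun j => (Real.exp (ρ j / 2) : ℂ))).re))
        atTop (nhds (φ ρ))) :
    Tendsto (fun k : ℕ => (1 / (k : ℝ)) * Real.log (Pker (S k) (Q k) z w))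
      atTop (nhds (φ (fun j => (ρ₁ j + ρ₂ j) / 2) - (φ ρ₁ + φ ρ₂) / 2)) :=
  berezin_same_orbit_pointwise_limit_general m S hS Q hQ φ ρ₁ ρ₂ θ z w hz hw hdiag
end

section
/- Fix ρ₁, ρ₂, θ₁, θ₂ ∈ ℝ^m and let z, w be the points with coordinates z_j = exp(ρ₁ⱼ/2 + i·θ₁ⱼ), w_j = exp(ρ₂ⱼ/2 + i·θ₂ⱼ) (arbitrary points of the open orbit). Assume the diagonal asymptotics hypothesis for each ρ ∈ {ρ₁, ρ₂, (ρ₁+ρ₂)/2}, i.e. (1/k)·log B_k(e^{ρ/2}, e^{ρ/2}) → φ̃(ρ) as k → ∞. Then limsup_{k→∞} (1/k)·log P_k(z,w) ≤ φ̃((ρ₁+ρ₂)/2) − (φ̃(ρ₁) + φ̃(ρ₂))/2, and if φ̃ is convex this upper bound is ≤ 0. (The bound equals minus one half of the Calabi diastasis D(z*,w*) between the ℝ₊^m-orbit representatives of z and w.) -/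
open Complex Finset ComplexConjugate Filter

/-!
In logarithmic coordinates `|z^α|² = e^{⟨α, ρ⟩}`, so the diagonal kernel `B_k(z, z)` depends only
on `ρ` and the triangle inequality bounds `|B_k(z, w)|` by the diagonal kernel at the midpoint
`(ρ₁ + ρ₂)/2`. Hence `P_k(z, w) ≤ B_k(ρ_mid) / (B_k(ρ₁) B_k(ρ₂))^{1/2}`, and the diagonal
asymptotics give exponential growth rate `φ̃(ρ_mid) - (φ̃(ρ₁) + φ̃(ρ₂))/2` for the right-hand side.
Convexity of `φ̃` makes this rate nonpositive.
-/

open Topology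

section ToricKernel

variable {m : ℕ} {S : Finset (Fin m → ℤ)} {Q : (Fin m → ℤ) → ℝ}

/-- The diagonal Bergman kernel `B(z, z)` at any `z` with `|z_j| = e^{ρ_j/2}`. -/
noncomputable def bergmanDiag (S : Finset (Fin m → ℤ)) (Q : (Fin m → ℤ) → ℝ)
    (ρ : Fin m → ℝ) : ℝ :=
  ∑ α ∈ S, Real.exp (∑ j, α j * ρ j) / Q α

lemma bergmanDiag_pos (hS : S.Nonempty) (hQ : ∀ α ∈ S, 0 < Q α) (ρ : Fin m → ℝ) :
    0 < bergmanDiag S Q ρ :=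
  sum_pos (fun α hα => div_pos (Real.exp_pos _) (hQ α hα)) hS

lemma norm_mpow_of_norm_eq {z : Fin m → ℂ} {ρ : Fin m → ℝ}
    (hz : ∀ j, ‖z j‖ = Real.exp (ρ j / 2)) (α : Fin m → ℤ) :
    ‖mpow z α‖ = Real.exp ((∑ j, α j * ρ j) / 2) := by
  rw [mpow, norm_prod, sum_div, Real.exp_sum]
  refine prod_congr rfl fun j _ => ?_
  rw [norm_zpow, hz j, ← Real.rpow_intCast, ← Real.exp_mul]
  ring_nf

lemma re_Bker_self_of_norm_eq {z : Fin m → ℂ} {ρ : Fin m → ℝ}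
    (hz : ∀ j, ‖z j‖ = Real.exp (ρ j / 2)) :
    (Bker S Q z z).re = bergmanDiag S Q ρ := by
  rw [Bker, re_sum]
  refine sum_congr rfl fun α _ => ?_
  rw [mul_conj, ← ofReal_div, ofReal_re, normSq_eq_norm_sq, norm_mpow_of_norm_eq hz,
    ← Real.exp_nat_mul]
  congr 2
  ring

lemma norm_Bker_le_bergmanDiag_midpoint (hQ : ∀ α ∈ S, 0 < Q α) {z w : Fin m → ℂ}
    {ρ σ : Fin m → ℝ} (hz : ∀ j, ‖z j‖ = Real.exp (ρ j / 2))
    (hw : ∀ j, ‖w j‖ = Real.exp (σ j / 2)) :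
    ‖Bker S Q z w‖ ≤ bergmanDiag S Q (fun j => (ρ j + σ j) / 2) := by
  refine (norm_sum_le _ _).trans_eq (sum_congr rfl fun α hα => ?_)
  rw [norm_div, norm_mul, norm_conj, norm_real, Real.norm_of_nonneg (hQ α hα).le,
    norm_mpow_of_norm_eq hz, norm_mpow_of_norm_eq hw, ← Real.exp_add, ← add_div,
    ← sum_add_distrib, sum_div]
  congr 2
  exact sum_congr rfl fun j _ => by ring

lemma Pker_le_bergmanDiag (hQ : ∀ α ∈ S, 0 < Q α) {z w : Fin m → ℂ} {ρ σ : Fin m → ℝ}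
    (hz : ∀ j, ‖z j‖ = Real.exp (ρ j / 2)) (hw : ∀ j, ‖w j‖ = Real.exp (σ j / 2)) :
    Pker S Q z w ≤ bergmanDiag S Q (fun j => (ρ j + σ j) / 2) /
      √(bergmanDiag S Q ρ * bergmanDiag S Q σ) := by
  rw [Pker, re_Bker_self_of_norm_eq hz, re_Bker_self_of_norm_eq hw]
  gcongr
  exact norm_Bker_le_bergmanDiag_midpoint hQ hz hw

end ToricKernel

lemma eventually_le_exp_of_tendsto_log_div {u : ℕ → ℝ} {L ε : ℝ}
    (hu : Tendsto (fun k : ℕ => (1 / (k : ℝ)) * Real.log (u k)) atTop (𝓝 L)) (hε : 0 < ε) :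
    ∀ᶠ k : ℕ in atTop, u k ≤ Real.exp (k * (L + ε)) := by
  filter_upwards [hu.eventually_lt_const (lt_add_of_pos_right L hε), eventually_gt_atTop 0]
    with k hk hk0
  have hk0' : (0 : ℝ) < k := Nat.cast_pos.mpr hk0
  calc u k ≤ Real.exp (Real.log (u k)) := Real.le_exp_log _
    _ = Real.exp (k * ((1 / k) * Real.log (u k))) := by field_simp
    _ ≤ Real.exp (k * (L + ε)) := by gcongr

lemma tendsto_log_div_sqrt_mul {a b c : ℕ → ℝ} {A B C : ℝ}
    (ha : ∀ k, 0 < a k) (hb : ∀ k, 0 < b k) (hc : ∀ k, 0 < c k)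
    (hA : Tendsto (fun k : ℕ => (1 / (k : ℝ)) * Real.log (a k)) atTop (𝓝 A))
    (hB : Tendsto (fun k : ℕ => (1 / (k : ℝ)) * Real.log (b k)) atTop (𝓝 B))
    (hC : Tendsto (fun k : ℕ => (1 / (k : ℝ)) * Real.log (c k)) atTop (𝓝 C)) :
    Tendsto (fun k : ℕ => (1 / (k : ℝ)) * Real.log (c k / √(a k * b k))) atTop
      (𝓝 (C - (A + B) / 2)) := by
  have hlog : ∀ k : ℕ, (1 / (k : ℝ)) * Real.log (c k / √(a k * b k)) =
      (1 / (k : ℝ)) * Real.log (c k) -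
        ((1 / (k : ℝ)) * Real.log (a k) + (1 / (k : ℝ)) * Real.log (b k)) / 2 := fun k => by
    rw [Real.log_div (hc k).ne' (Real.sqrt_pos.mpr (mul_pos (ha k) (hb k))).ne',
      Real.log_sqrt (mul_pos (ha k) (hb k)).le, Real.log_mul (ha k).ne' (hb k).ne']
    ring
  simpa only [hlog] using hC.sub ((hA.add hB).div_const 2)

lemma ConvexOn.map_pi_midpoint_le {ι : Type*} {s : Set (ι → ℝ)} {f : (ι → ℝ) → ℝ}
    (hf : ConvexOn ℝ s f) {x y : ι → ℝ} (hx : x ∈ s) (hy : y ∈ s) :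
    f (fun j => (x j + y j) / 2) ≤ (f x + f y) / 2 := by
  have hmid : (fun j => (x j + y j) / 2) = (1 / 2 : ℝ) • x + (1 / 2 : ℝ) • y := by
    funext j
    simp only [Pi.add_apply, Pi.smul_apply, smul_eq_mul]
    ring
  have := hf.2 hx hy (by norm_num : (0 : ℝ) ≤ 1 / 2) (by norm_num : (0 : ℝ) ≤ 1 / 2)
    (by norm_num)
  rw [← hmid, smul_eq_mul, smul_eq_mul] at this
  linarith

theorem berezin_offdiag_limsup_le_diastasis_bound_general
    (m : ℕ)
    (S : ℕ → Finset (Fin m → ℤ)) (hS : ∀ k, (S k).Nonempty)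
    (Q : ℕ → (Fin m → ℤ) → ℝ) (hQ : ∀ k, ∀ α ∈ S k, 0 < Q k α)
    (φ : (Fin m → ℝ) → ℝ)
    (ρ₁ ρ₂ θ₁ θ₂ : Fin m → ℝ) (z w : Fin m → ℂ)
    (hz : ∀ j, z j = Complex.exp ((ρ₁ j / 2 : ℝ) + (θ₁ j : ℝ) * Complex.I))
    (hw : ∀ j, w j = Complex.exp ((ρ₂ j / 2 : ℝ) + (θ₂ j : ℝ) * Complex.I))
    (hdiag : ∀ ρ ∈ ({ρ₁, ρ₂, fun j => (ρ₁ j + ρ₂ j) / 2} : Set (Fin m → ℝ)),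
      Tendsto (fun k : ℕ => (1 / (k : ℝ)) * Real.log
          ((Bker (S k) (Q k) (fun j => (Real.exp (ρ j / 2) : ℂ))
            (fun j => (Real.exp (ρ j / 2) : ℂ))).re))
        atTop (nhds (φ ρ))) :
    (∀ ε > (0 : ℝ), ∀ᶠ k : ℕ in atTop,
      Pker (S k) (Q k) z w
        ≤ Real.exp ((k : ℝ) *
            ((φ (fun j => (ρ₁ j + ρ₂ j) / 2) - (φ ρ₁ + φ ρ₂) / 2) + ε)))
    ∧ (ConvexOn ℝ Set.univ φ →
        φ (fun j => (ρ₁ j + ρ₂ j) / 2) - (φ ρ₁ + φ ρ₂) / 2 ≤ 0) := by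
  have hz' : ∀ j, ‖z j‖ = Real.exp (ρ₁ j / 2) := fun j => by simp [hz j, norm_exp]
  have hw' : ∀ j, ‖w j‖ = Real.exp (ρ₂ j / 2) := fun j => by simp [hw j, norm_exp]
  have hdiag' : ∀ ρ ∈ ({ρ₁, ρ₂, fun j => (ρ₁ j + ρ₂ j) / 2} : Set (Fin m → ℝ)),
      Tendsto (fun k : ℕ => (1 / (k : ℝ)) * Real.log (bergmanDiag (S k) (Q k) ρ)) atTop
        (𝓝 (φ ρ)) := fun ρ hρ => by
    simpa only [re_Bker_self_of_norm_eq fun j => Complex.norm_of_nonneg (Real.exp_pos _).le]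
      using hdiag ρ hρ
  have hpos := fun ρ k => bergmanDiag_pos (hS k) (hQ k) ρ
  refine ⟨fun ε hε => ?_, fun hφ => ?_⟩
  · have hrate := tendsto_log_div_sqrt_mul (hpos ρ₁) (hpos ρ₂)
      (hpos fun j => (ρ₁ j + ρ₂ j) / 2) (hdiag' ρ₁ (by simp)) (hdiag' ρ₂ (by simp))
      (hdiag' _ (by simp))
    filter_upwards [eventually_le_exp_of_tendsto_log_div hrate hε] with k hk
    exact (Pker_le_bergmanDiag (hQ k) hz' hw').trans hk
  · linarith [hφ.map_pi_midpoint_le (Set.mem_univ ρ₁) (Set.mem_univ ρ₂)]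

/-- for arbitrary points `z, w` of the open orbit, assuming the diagonal
asymptotics for `ρ ∈ {ρ₁, ρ₂, (ρ₁+ρ₂)/2}`, one has
`limsup_{k→∞} (1/k)·log P_k(z,w) ≤ φ̃((ρ₁+ρ₂)/2) − (φ̃(ρ₁)+φ̃(ρ₂))/2`
(stated equivalently, since `P_k ≥ 0` may vanish and `log 0 = -∞`, as: for every
`ε > 0`, eventually `P_k(z,w) ≤ exp(k·(bound + ε))`), and if `φ̃` is convex the
bound is `≤ 0`.  The bound is minus one half of the diastasis `D(z*,w*)`. -/
theorem berezin_offdiag_limsup_le_diastasis_bound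
    (m : ℕ) (hm : 1 ≤ m)
    (S : ℕ → Finset (Fin m → ℤ)) (hS : ∀ k, (S k).Nonempty)
    (Q : ℕ → (Fin m → ℤ) → ℝ) (hQ : ∀ k, ∀ α ∈ S k, 0 < Q k α)
    (φ : (Fin m → ℝ) → ℝ)
    (ρ₁ ρ₂ θ₁ θ₂ : Fin m → ℝ) (z w : Fin m → ℂ)
    (hz : ∀ j, z j = Complex.exp ((ρ₁ j / 2 : ℝ) + (θ₁ j : ℝ) * Complex.I))
    (hw : ∀ j, w j = Complex.exp ((ρ₂ j / 2 : ℝ) + (θ₂ j : ℝ) * Complex.I))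
    (hdiag : ∀ ρ ∈ ({ρ₁, ρ₂, fun j => (ρ₁ j + ρ₂ j) / 2} : Set (Fin m → ℝ)),
      Tendsto (fun k : ℕ => (1 / (k : ℝ)) * Real.log
          ((Bker (S k) (Q k) (fun j => (Real.exp (ρ j / 2) : ℂ))
            (fun j => (Real.exp (ρ j / 2) : ℂ))).re))
        atTop (nhds (φ ρ))) :
    (∀ ε > (0 : ℝ), ∀ᶠ k : ℕ in atTop,
      Pker (S k) (Q k) z w
        ≤ Real.exp ((k : ℝ) *
            ((φ (fun j => (ρ₁ j + ρ₂ j) / 2) - (φ ρ₁ + φ ρ₂) / 2) + ε)))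
    ∧ (ConvexOn ℝ Set.univ φ →
        φ (fun j => (ρ₁ j + ρ₂ j) / 2) - (φ ρ₁ + φ ρ₂) / 2 ≤ 0) :=
  berezin_offdiag_limsup_le_diastasis_bound_general m S hS Q hQ φ ρ₁ ρ₂ θ₁ θ₂ z w hz hw hdiag
end

section
/- Let φ : ℝ^m → ℝ be strictly convex, fix x ≠ x' in ℝ^m and y ∈ ℝ^m, and write u = (x+x')/2 and δ = φ(x)/2 + φ(x')/2 − φ(u) > 0. For each λ ∈ ℕ, λ ≥ 1, let Q_λ : ℝ^m → ℝ be measurable with Q_λ(α) > 0, suppose α ↦ exp(⟨α,u⟩)/Q_λ(α) is integrable, and define K_λ and Π_λ(z,w) = K_λ(z,w)e^{−λφ(Re z)/2}e^{−λφ(Re w)/2} as in Christ's kernel representation. Assume the diagonal subexponential asymptotics (1/λ)·log Π_λ(u+iy, u+iy) → 0 as λ → ∞. Then (1/λ)·log |Π_λ(x+iy, x'+iy)| → −δ < 0 as λ → ∞; i.e. the Szegő kernel between two points with equal imaginary parts and distinct real parts decays exponentially at speed λ with rate exactly δ. -/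
/-!
When the two points have the same imaginary part, the oscillatory factor in Christ's integral
disappears, so `K(x+iy, x'+iy)` is the positive real number `∫ exp ⟨α, u⟩ / Q` with
`u = (x + x')/2`, which is also `K(u+iy, u+iy)`. Hence, exactly,
`|Π_λ(x+iy, x'+iy)| = Π_λ(u+iy, u+iy) · e^{-λδ}`, and the diagonal subexponential asymptotics
turn this into the rate `-δ`; strict convexity at the midpoint gives `δ > 0`.
-/

open Complex Finset MeasureTheory Filter

/-- Christ's ('non-compact toric') Bergman-type kernel
`K(x+iy, x'+iy') = ∫_{ℝ^m} exp(⟨α,(x+x')/2⟩ + i⟨α,y−y'⟩)/Q(α) dα`. -/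
noncomputable def christKer {m : ℕ} (Q : (Fin m → ℝ) → ℝ)
    (x y x' y' : Fin m → ℝ) : ℂ :=
  ∫ α : Fin m → ℝ,
    Complex.exp (((∑ j, α j * ((x j + x' j) / 2) : ℝ) : ℂ)
        + ((∑ j, α j * (y j - y' j) : ℝ) : ℂ) * Complex.I) / (Q α : ℂ)

/-- The Szegő kernel of the weight `e^{−λφ}`:
`Π_λ(z,w) = K(z,w)·e^{−λφ(Re z)/2}·e^{−λφ(Re w)/2}`. -/
noncomputable def christSzego {m : ℕ} (φ : (Fin m → ℝ) → ℝ) (Q : (Fin m → ℝ) → ℝ)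
    (lam : ℝ) (x y x' y' : Fin m → ℝ) : ℂ :=
  christKer Q x y x' y' * Real.exp (-(lam * φ x) / 2) * Real.exp (-(lam * φ x') / 2)

theorem StrictConvexOn.lt_average_of_ne {E : Type*} [AddCommGroup E] [Module ℝ E]
    {φ : E → ℝ} (hφ : StrictConvexOn ℝ Set.univ φ) {x x' : E} (hxx : x ≠ x') :
    φ ((1 / 2 : ℝ) • x + (1 / 2 : ℝ) • x') < φ x / 2 + φ x' / 2 := by
  have h := hφ.2 (Set.mem_univ x) (Set.mem_univ x') hxx one_half_pos one_half_pos
    (add_halves 1)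
  simpa only [smul_eq_mul, one_div, inv_mul_eq_div] using h

theorem MeasureTheory.integral_pos_of_forall_pos {α : Type*} [MeasurableSpace α]
    {μ : Measure α} [NeZero μ] {f : α → ℝ} (hf : Integrable f μ) (hpos : ∀ a, 0 < f a) :
    0 < ∫ a, f a ∂μ := by
  rw [integral_pos_iff_support_of_nonneg (fun a => (hpos a).le) hf,
    Function.support_eq_univ fun a => (hpos a).ne']
  exact Measure.measure_univ_pos.2 (NeZero.ne μ)

section ChristKernel

variable {m : ℕ} (Q : (Fin m → ℝ) → ℝ) (x x' y : Fin m → ℝ)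

theorem christKer_midpoint (y' : Fin m → ℝ) :
    christKer Q (fun j => (x j + x' j) / 2) y (fun j => (x j + x' j) / 2) y'
      = christKer Q x y x' y' := by
  simp only [christKer, add_halves]

theorem christKer_same_imag :
    christKer Q x y x' y
      = ((∫ α : Fin m → ℝ, Real.exp (∑ j, α j * ((x j + x' j) / 2)) / Q α : ℝ) : ℂ) := by
  rw [christKer, ← integral_complex_ofReal]
  congr 1 with α
  simp only [sub_self, mul_zero, Finset.sum_const_zero, Complex.ofReal_zero, zero_mul,
    add_zero, Complex.ofReal_div, Complex.ofReal_exp]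

theorem christSzego_midpoint_re_pos (φ : (Fin m → ℝ) → ℝ) (lam : ℝ) (hQ : ∀ α, 0 < Q α)
    (hint : Integrable fun α : Fin m → ℝ => Real.exp (∑ j, α j * ((x j + x' j) / 2)) / Q α) :
    0 < (christSzego φ Q lam (fun j => (x j + x' j) / 2) y
      (fun j => (x j + x' j) / 2) y).re := by
  rw [christSzego, christKer_midpoint, christKer_same_imag, ← Complex.ofReal_mul,
    ← Complex.ofReal_mul, Complex.ofReal_re]
  have hK := integral_pos_of_forall_pos hint fun α => div_pos (Real.exp_pos _) (hQ α)
  positivity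

theorem norm_christSzego_same_imag (φ : (Fin m → ℝ) → ℝ) (lam : ℝ) :
    ‖christSzego φ Q lam x y x' y‖
      = |(christSzego φ Q lam (fun j => (x j + x' j) / 2) y
          (fun j => (x j + x' j) / 2) y).re|
        * Real.exp (-(lam * (φ x / 2 + φ x' / 2 - φ (fun j => (x j + x' j) / 2)))) := by
  rw [christSzego, christSzego, christKer_midpoint, christKer_same_imag, ← Complex.ofReal_mul,
    ← Complex.ofReal_mul, ← Complex.ofReal_mul, ← Complex.ofReal_mul, Complex.ofReal_re,
    Complex.norm_real, Real.norm_eq_abs, abs_mul, abs_mul, abs_mul, abs_mul,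
    abs_of_pos (Real.exp_pos _), abs_of_pos (Real.exp_pos _), abs_of_pos (Real.exp_pos _),
    mul_assoc, mul_assoc, mul_assoc, ← Real.exp_add, ← Real.exp_add, ← Real.exp_add]
  ring_nf

end ChristKernel

theorem one_div_mul_log_abs_mul_exp_neg_mul {P lam δ : ℝ} (hP : P ≠ 0) (hlam : lam ≠ 0) :
    1 / lam * Real.log (|P| * Real.exp (-(lam * δ))) = 1 / lam * Real.log P - δ := by
  rw [Real.log_mul (abs_ne_zero.2 hP) (Real.exp_pos _).ne', Real.log_abs, Real.log_exp]
  field_simp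
  ring

theorem christ_szego_exponential_decay_same_imaginary_parts_general
    (m : ℕ)
    (φ : (Fin m → ℝ) → ℝ) (hφ : StrictConvexOn ℝ Set.univ φ)
    (x x' y : Fin m → ℝ) (hxx : x ≠ x')
    (Q : ℕ → (Fin m → ℝ) → ℝ)
    (hQpos : ∀ lam : ℕ, 1 ≤ lam → ∀ α, 0 < Q lam α)
    (hint : ∀ lam : ℕ, 1 ≤ lam → Integrable (fun α : Fin m → ℝ =>
      Real.exp (∑ j, α j * ((x j + x' j) / 2)) / Q lam α))
    (hdiag : Tendsto (fun lam : ℕ => (1 / (lam : ℝ)) * Real.log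
        ((christSzego φ (Q lam) (lam : ℝ) (fun j => (x j + x' j) / 2) y
          (fun j => (x j + x' j) / 2) y).re))
      atTop (nhds 0)) :
    0 < φ x / 2 + φ x' / 2 - φ (fun j => (x j + x' j) / 2)
    ∧ Tendsto (fun lam : ℕ => (1 / (lam : ℝ)) * Real.log
        ‖christSzego φ (Q lam) (lam : ℝ) x y x' y‖)
      atTop
      (nhds (-(φ x / 2 + φ x' / 2 - φ (fun j => (x j + x' j) / 2)))) := by
  set δ := φ x / 2 + φ x' / 2 - φ (fun j => (x j + x' j) / 2)
  have hmid : (fun j => (x j + x' j) / 2) = (1 / 2 : ℝ) • x + (1 / 2 : ℝ) • x' := by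
    funext j
    simp only [Pi.add_apply, Pi.smul_apply, smul_eq_mul]
    ring
  have hδ : 0 < δ := by
    have := hφ.lt_average_of_ne hxx
    rw [← hmid] at this
    exact sub_pos.2 this
  refine ⟨hδ, ?_⟩
  rw [← zero_sub]
  refine (hdiag.sub_const δ).congr' ?_
  filter_upwards [eventually_ge_atTop 1] with lam hlam
  have hlam0 : (lam : ℝ) ≠ 0 := by positivity
  rw [norm_christSzego_same_imag, one_div_mul_log_abs_mul_exp_neg_mul _ hlam0]
  exact (christSzego_midpoint_re_pos _ _ _ _ _ _ (hQpos lam hlam) (hint lam hlam)).ne'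

/-- for a strictly convex potential `φ` and distinct real parts
`x ≠ x'`, with `u = (x+x')/2` and `δ = φ(x)/2 + φ(x')/2 − φ(u)`, assuming the
diagonal subexponential asymptotics `(1/λ)·log Π_λ(u+iy,u+iy) → 0`, one has
`δ > 0` and `(1/λ)·log |Π_λ(x+iy,x'+iy)| → −δ < 0`: the Szegő kernel between two
points with equal imaginary parts and distinct real parts decays exponentially
at speed `λ` with rate exactly `δ`. -/
theorem christ_szego_exponential_decay_same_imaginary_parts
    (m : ℕ) (hm : 1 ≤ m)
    (φ : (Fin m → ℝ) → ℝ) (hφ : StrictConvexOn ℝ Set.univ φ)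
    (x x' y : Fin m → ℝ) (hxx : x ≠ x')
    (Q : ℕ → (Fin m → ℝ) → ℝ)
    (hQmeas : ∀ lam : ℕ, 1 ≤ lam → Measurable (Q lam))
    (hQpos : ∀ lam : ℕ, 1 ≤ lam → ∀ α, 0 < Q lam α)
    (hint : ∀ lam : ℕ, 1 ≤ lam → Integrable (fun α : Fin m → ℝ =>
      Real.exp (∑ j, α j * ((x j + x' j) / 2)) / Q lam α))
    (hdiag : Tendsto (fun lam : ℕ => (1 / (lam : ℝ)) * Real.log
        ((christSzego φ (Q lam) (lam : ℝ) (fun j => (x j + x' j) / 2) y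
          (fun j => (x j + x' j) / 2) y).re))
      atTop (nhds 0)) :
    0 < φ x / 2 + φ x' / 2 - φ (fun j => (x j + x' j) / 2)
    ∧ Tendsto (fun lam : ℕ => (1 / (lam : ℝ)) * Real.log
        ‖christSzego φ (Q lam) (lam : ℝ) x y x' y‖)
      atTop
      (nhds (-(φ x / 2 + φ x' / 2 - φ (fun j => (x j + x' j) / 2)))) :=
  christ_szego_exponential_decay_same_imaginary_parts_general m φ hφ x x' y hxx Q hQpos hint hdiag
end
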